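/- arXiv:0908.1138 — 4 statements merged into one kernel-verified Lean document; each statement's English description precedes it below -/
import Mathlib

section
/- Let (M,d) be a metric space, c : ℝ≥0 → M a ray with trace C = c(ℝ≥0) and Busemann function B_c. Suppose ĉ : ℝ≥0 → M is a ray such that there exist minimal geodesic segments c_n : [0, L_n] → M (isometric embeddings) with L_n → ∞, c_n(t) → ĉ(t) pointwise for each fixed t, and d(c_n(L_n), C) → 0. Then for all s,t ≥ 0 one has B_c(ĉ(t)) − B_c(ĉ(s)) = s − t. -/
/-!
Pick points `c (uₙ)` on the ray within `o(1)` of the endpoints `cₙ (Lₙ)`. Since `cₙ (0) → ĉ 0`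
and `Lₙ → ∞`, also `uₙ → ∞`, so `B_c(p) = lim (d(p, c uₙ) - uₙ)`. Going through the segment `cₙ`,
`d(ĉ t, c uₙ) ≲ Lₙ - t` while `d(ĉ 0, c uₙ) ≳ Lₙ`, hence `B_c(ĉ t) - B_c(ĉ 0) ≤ -t`. The reverse
inequality holds because `B_c` is `1`-Lipschitz, so `B_c` drops with unit speed along `ĉ`.
-/

open NNReal Filter Metric Topology

section

variable {M : Type*} [MetricSpace M]

theorem le_add_dist_of_tendsto_dist_sub (c : ℝ≥0 → M) {B : M → ℝ} {p q : M}
    (hp : Tendsto (fun t : ℝ≥0 => dist p (c t) - (t : ℝ)) atTop (𝓝 (B p)))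
    (hq : Tendsto (fun t : ℝ≥0 => dist q (c t) - (t : ℝ)) atTop (𝓝 (B q))) :
    B p ≤ B q + dist p q :=
  le_of_tendsto_of_tendsto' hp (hq.add_const _) fun t => by
    linarith [dist_triangle p q (c t)]

theorem exists_tendsto_dist_comp_of_tendsto_infDist {α : Type*} [Nonempty α] (c : α → M)
    {x : ℕ → M} (h : Tendsto (fun n => infDist (x n) (Set.range c)) atTop (𝓝 0)) :
    ∃ u : ℕ → α, Tendsto (fun n => dist (x n) (c (u n))) atTop (𝓝 0) := by
  have hlt : ∀ n : ℕ, ∃ a, dist (x n) (c a) < infDist (x n) (Set.range c) + 1 / (n + 1) :=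
    fun n => by
      obtain ⟨_, ⟨a, rfl⟩, ha⟩ := (infDist_lt_iff (Set.range_nonempty c)).1
        (lt_add_of_pos_right _ Nat.one_div_pos_of_nat)
      exact ⟨a, ha⟩
  choose u hu using hlt
  refine ⟨u, squeeze_zero (fun _ => dist_nonneg) (fun n => (hu n).le) ?_⟩
  simpa using h.add tendsto_one_div_add_atTop_nhds_zero_nat

theorem tendsto_atTop_of_tendsto_dist_ray {ι : Type*} {l : Filter ι} {c : ℝ≥0 → M}
    (hc : ∀ s t : ℝ≥0, dist (c s) (c t) = |(s : ℝ) - (t : ℝ)|) {u : ι → ℝ≥0} (p : M)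
    (h : Tendsto (fun i => dist p (c (u i))) l atTop) : Tendsto u l atTop := by
  rw [← NNReal.tendsto_coe_atTop]
  refine tendsto_atTop_mono (fun i => ?_) (tendsto_atTop_add_const_right _ (-dist p (c 0)) h)
  have hu : dist (c 0) (c (u i)) = u i := by simp [hc]
  linarith [dist_triangle p (c 0) (c (u i))]

theorem tendsto_dist_atTop_of_tendsto {ι : Type*} {l : Filter ι} {x y z : ι → M} {p : M}
    (hx : Tendsto x l (𝓝 p)) (hxy : Tendsto (fun i => dist (x i) (y i)) l atTop)
    (hyz : Tendsto (fun i => dist (y i) (z i)) l (𝓝 0)) :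
    Tendsto (fun i => dist p (z i)) l atTop := by
  have hsmall : Tendsto (fun i => -(dist (x i) p + dist (y i) (z i))) l (𝓝 0) := by
    simpa using ((tendsto_iff_dist_tendsto_zero.1 hx).add hyz).neg
  refine tendsto_atTop_mono (fun i => ?_) (hxy.atTop_add hsmall)
  linarith [dist_triangle4 (x i) p (z i) (y i), dist_comm (z i) (y i)]

theorem dist_sub_dist_le (a b x y z q : M) :
    dist a q - dist b q ≤ dist y z - dist x z + dist a y + dist b x + 2 * dist z q := by
  linarith [dist_triangle4 a y z q, dist_triangle4 x b q z, dist_comm x b, dist_comm q z]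

theorem sub_le_of_tendsto_dist_sub {c : ℝ≥0 → M} {B : M → ℝ} {a b : M}
    (ha : Tendsto (fun t : ℝ≥0 => dist a (c t) - (t : ℝ)) atTop (𝓝 (B a)))
    (hb : Tendsto (fun t : ℝ≥0 => dist b (c t) - (t : ℝ)) atTop (𝓝 (B b)))
    {u : ℕ → ℝ≥0} (hu : Tendsto u atTop atTop) {x y z : ℕ → M} {τ : ℝ}
    (hτ : ∀ᶠ n in atTop, dist (x n) (z n) - dist (y n) (z n) = τ)
    (hx : Tendsto x atTop (𝓝 b)) (hy : Tendsto y atTop (𝓝 a))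
    (hz : Tendsto (fun n => dist (z n) (c (u n))) atTop (𝓝 0)) :
    B a - B b ≤ -τ := by
  have hlim : Tendsto (fun n => -τ + (dist a (y n) + dist b (x n) + 2 * dist (z n) (c (u n))))
      atTop (𝓝 (-τ)) := by
    have hya := tendsto_iff_dist_tendsto_zero.1 hy
    have hxb := tendsto_iff_dist_tendsto_zero.1 hx
    simp only [dist_comm a, dist_comm b]
    simpa using tendsto_const_nhds.add ((hya.add hxb).add (hz.const_mul 2))
  refine le_of_tendsto_of_tendsto ((ha.comp hu).sub (hb.comp hu)) hlim ?_
  filter_upwards [hτ] with n hn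
  simp only [Function.comp_apply]
  linarith [dist_sub_dist_le a b (x n) (y n) (z n) (c (u n))]

end

/-- Lemma 2.8: if `ĉ` is a ray which is a pointwise limit of minimal
geodesic segments `cₙ : [0, Lₙ] → M` with `Lₙ → ∞` whose endpoints approach the trace
`C` of the ray `c`, then the Busemann function `B_c` decreases with unit speed along `ĉ`:
`B_c(ĉ t) - B_c(ĉ s) = s - t`. -/
theorem coray_busemann {M : Type*} [MetricSpace M] (c : ℝ≥0 → M)
    (hc : ∀ s t : ℝ≥0, dist (c s) (c t) = |(s : ℝ) - (t : ℝ)|)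
    (B : M → ℝ)
    (hB : ∀ p : M, Tendsto (fun t : ℝ≥0 => dist p (c t) - (t : ℝ)) atTop (𝓝 (B p)))
    (chat : ℝ≥0 → M)
    (hchat : ∀ s t : ℝ≥0, dist (chat s) (chat t) = |(s : ℝ) - (t : ℝ)|)
    (L : ℕ → ℝ≥0) (cn : ℕ → ℝ≥0 → M)
    (hLn : Tendsto (fun n => (L n : ℝ)) atTop atTop)
    (hmin : ∀ n, ∀ s t : ℝ≥0, s ≤ L n → t ≤ L n →
      dist (cn n s) (cn n t) = |(s : ℝ) - (t : ℝ)|)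
    (hconv : ∀ t : ℝ≥0, Tendsto (fun n => cn n t) atTop (𝓝 (chat t)))
    (hend : Tendsto (fun n => infDist (cn n (L n)) (Set.range c)) atTop (𝓝 0)) :
    ∀ s t : ℝ≥0, B (chat t) - B (chat s) = (s : ℝ) - (t : ℝ) := by
  obtain ⟨u, hz⟩ := exists_tendsto_dist_comp_of_tendsto_infDist c hend
  have hseg : ∀ t : ℝ≥0, ∀ᶠ n in atTop, dist (cn n t) (cn n (L n)) = L n - t := fun t => by
    filter_upwards [hLn.eventually_ge_atTop t] with n hn
    rw [hmin n t (L n) (by exact_mod_cast hn) le_rfl, abs_of_nonpos (by linarith)]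
    ring
  have hu : Tendsto u atTop atTop := by
    refine tendsto_atTop_of_tendsto_dist_ray hc (chat 0)
      (tendsto_dist_atTop_of_tendsto (hconv 0) (hLn.congr' ?_) hz)
    filter_upwards [hseg 0] with n hn
    simp [hn]
  have hdecr : ∀ t : ℝ≥0, B (chat t) - B (chat 0) ≤ -t := fun t => by
    refine sub_le_of_tendsto_dist_sub (hB _) (hB _) hu ?_ (hconv 0) (hconv t) hz
    filter_upwards [hseg 0, hseg t] with n h0 ht
    rw [h0, ht, NNReal.coe_zero]
    ring
  have hunit : ∀ t : ℝ≥0, B (chat t) = B (chat 0) - t := fun t => by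
    have hlip := le_add_dist_of_tendsto_dist_sub c (hB (chat 0)) (hB (chat t))
    simp only [hchat, NNReal.coe_zero, zero_sub, abs_neg, NNReal.abs_eq] at hlip
    linarith [hdecr t]
  intro s t
  rw [hunit s, hunit t]
  ring
end

section
/- Let (M,d) be a proper metric space that is not compact, and assume M is a geodesic space (any two points are joined by a minimizing geodesic). Then for every p ∈ M there exists a ray c : ℝ≥0 → M with c(0) = p. -/
/-!
Geodesic segments from `p` to points `x` ever farther away, extended to be constant beyond their
endpoints, are `1`-Lipschitz maps `ℝ → M` sending `0` to `p`; so at each time `t` they stay in the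
compact ball `closedBall p |t|`. Their pointwise limit along an ultrafilter finer than `cobounded M`
(a nontrivial filter since `M` is non-compact) is then a ray from `p`: every distance
`dist (c s) (c t)` is a limit of distances that eventually equal `|s - t|`.
-/

open Filter Metric Topology

theorem Ultrafilter.exists_forall_tendsto_of_eventually_mem_isCompact {ι α X : Type*}
    [TopologicalSpace X] (u : Ultrafilter ι) (f : ι → α → X) {K : α → Set X}
    (hK : ∀ a, IsCompact (K a)) (hf : ∀ a, ∀ᶠ i in u, f i a ∈ K a) :
    ∃ c : α → X, ∀ a, Tendsto (f · a) u (𝓝 (c a)) := by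
  choose c _ hc using fun a => (hK a).ultrafilter_le_nhds' (u.map (f · a)) (hf a)
  exact ⟨c, hc⟩

theorem lipschitzWith_one_comp_projIcc {M : Type*} [PseudoMetricSpace M] {γ : ℝ → M} {a b : ℝ}
    (hab : a ≤ b)
    (hγ : ∀ s ∈ Set.Icc a b, ∀ t ∈ Set.Icc a b, dist (γ s) (γ t) = |s - t|) :
    LipschitzWith 1 (fun t => γ (Set.projIcc a b hab t)) :=
  LipschitzWith.of_dist_le_mul fun s t => by
    rw [hγ _ (Set.projIcc a b hab s).2 _ (Set.projIcc a b hab t).2, ← Real.dist_eq]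
    exact (LipschitzWith.projIcc hab).dist_le_mul s t

theorem exists_ray_of_lipschitzWith_of_eventually_dist_eq {M ι : Type*} [MetricSpace M]
    [ProperSpace M] (l : Filter ι) [l.NeBot] (f : ι → ℝ → M) (p : M) (hf0 : ∀ i, f i 0 = p)
    (hf : ∀ i, LipschitzWith 1 (f i))
    (hdist : ∀ s t : ℝ, 0 ≤ s → 0 ≤ t → ∀ᶠ i in l, dist (f i s) (f i t) = |s - t|) :
    ∃ c : ℝ → M, c 0 = p ∧ ∀ s t : ℝ, 0 ≤ s → 0 ≤ t → dist (c s) (c t) = |s - t| := by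
  set u := Ultrafilter.of l
  have hball : ∀ t, ∀ᶠ i in u, f i t ∈ closedBall p |t| := fun t =>
    Eventually.of_forall fun i => by
      simpa [hf0 i, Real.dist_eq] using (hf i).dist_le_mul t 0
  obtain ⟨c, hc⟩ := u.exists_forall_tendsto_of_eventually_mem_isCompact f
    (fun t => isCompact_closedBall p |t|) hball
  refine ⟨c, tendsto_nhds_unique (hc 0) (by simpa only [hf0] using tendsto_const_nhds), ?_⟩
  intro s t hs ht
  have heq : ∀ᶠ i in u, dist (f i s) (f i t) = |s - t| := Ultrafilter.of_le l (hdist s t hs ht)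
  exact tendsto_nhds_unique ((hc s).dist (hc t))
    (tendsto_const_nhds.congr' (heq.mono fun _ h => h.symm))

/-- part of Proposition 2.4: a proper, non-compact geodesic metric space
carries a geodesic ray starting at every point. -/
theorem exists_ray_of_noncompact {M : Type*} [MetricSpace M] [ProperSpace M]
    [NoncompactSpace M]
    (hgeo : ∀ x y : M, ∃ γ : ℝ → M, γ 0 = x ∧ γ (dist x y) = y ∧
      ∀ s ∈ Set.Icc (0 : ℝ) (dist x y), ∀ t ∈ Set.Icc (0 : ℝ) (dist x y),
        dist (γ s) (γ t) = |s - t|) :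
    ∀ p : M, ∃ c : ℝ → M, c 0 = p ∧
      ∀ s t : ℝ, 0 ≤ s → 0 ≤ t → dist (c s) (c t) = |s - t| := by
  intro p
  have : (Bornology.cobounded M).NeBot := by
    rw [cobounded_eq_cocompact]
    infer_instance
  choose γ hγ0 _ hγ using hgeo p
  refine exists_ray_of_lipschitzWith_of_eventually_dist_eq (Bornology.cobounded M)
    (fun x t => γ x (Set.projIcc 0 (dist p x) dist_nonneg t)) p
    (fun x => by simp [hγ0]) (fun x => lipschitzWith_one_comp_projIcc _ (hγ x)) ?_
  intro s t hs ht
  filter_upwards [(tendsto_dist_left_cobounded_atTop p).eventually_ge_atTop (max s t)] with x hx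
  have hs' : s ∈ Set.Icc 0 (dist p x) := ⟨hs, (le_max_left s t).trans hx⟩
  have ht' : t ∈ Set.Icc 0 (dist p x) := ⟨ht, (le_max_right s t).trans hx⟩
  simpa [Set.projIcc_of_mem _ hs', Set.projIcc_of_mem _ ht'] using hγ x s hs' t ht'
end

section
/- Let h₁, h₂ ∈ ℤ² be primitive vectors. Consider two ℤ²-periodic families of curves in ℝ² projecting to simple closed curves on the torus T² = ℝ²/ℤ² in the homology classes h₁ and h₂, such that any two of their lifts intersect at most once. Then the traces on T² of the two closed curves intersect in exactly |h₁·h₂| points, where h₁·h₂ = det(h₁,h₂) is the homological intersection number. -/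
open Filter Topology

/-- Projection from the plane to the torus `T² = (ℝ/ℤ) × (ℝ/ℤ)`. -/
noncomputable def torusProj (x : ℝ × ℝ) : AddCircle (1 : ℝ) × AddCircle (1 : ℝ) :=
  ((x.1 : AddCircle (1 : ℝ)), (x.2 : AddCircle (1 : ℝ)))

/-- Cast an integer vector to a real vector. -/
def intVec (v : ℤ × ℤ) : ℝ × ℝ := ((v.1 : ℝ), (v.2 : ℝ))

/-!
Lifts of the two curves are quasi-periodic, so `(s, t) ↦ γ₁ s - γ₂ t` is a bounded continuous
perturbation of the invertible linear map `(s, t) ↦ s h₁ - t h₂`. Such a perturbation is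
surjective: if `z + Q z` omitted `v`, then `z + Q z - v` would have a continuous logarithm on all
of `ℂ`, and dividing by `z` on a large circle would give a continuous logarithm of `z` there.
Hence every translate `γ₂ + v`, `v ∈ ℤ²`, meets `γ₁`, by hypothesis in exactly one point `p v`.
Every intersection point on the torus is the image of some `p v`, and since both curves are simple
on the torus, `p v` and `p v'` have the same image exactly when `v' - v ∈ ℤ h₁ + ℤ h₂`. As `h₁` is
primitive, `v ↦ h₁ × v` identifies `ℤ² ⧸ (ℤ h₁ + ℤ h₂)` with `ℤ ⧸ (h₁ × h₂)`.
-/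

open Set Bornology Function

def cross (u v : ℤ × ℤ) : ℤ := u.1 * v.2 - u.2 * v.1

lemma cross_surjective {u : ℤ × ℤ} (hu : IsCoprime u.1 u.2) : Surjective (cross u) := by
  obtain ⟨p, q, hpq⟩ := hu
  exact fun c => ⟨(-(q * c), p * c), by simp only [cross]; linear_combination c * hpq⟩

lemma cross_sub (u v w : ℤ × ℤ) : cross u (v - w) = cross u v - cross u w := by
  simp only [cross, Prod.fst_sub, Prod.snd_sub]; ring

lemma exists_eq_zsmul_of_cross_eq_zero {u w : ℤ × ℤ} (hu : IsCoprime u.1 u.2)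
    (h : cross u w = 0) : ∃ m : ℤ, w = m • u := by
  obtain ⟨p, q, hpq⟩ := hu
  refine ⟨p * w.1 + q * w.2, Prod.ext ?_ ?_⟩ <;> simp only [cross, Prod.smul_fst,
    Prod.smul_snd, smul_eq_mul] at h ⊢
  · linear_combination (-w.1) * hpq - q * h
  · linear_combination (-w.2) * hpq + p * h

lemma exists_eq_zsmul_add_zsmul_iff_dvd {u v w : ℤ × ℤ} (hu : IsCoprime u.1 u.2) :
    (∃ m n : ℤ, w = m • u + n • v) ↔ cross u v ∣ cross u w := by
  constructor
  · rintro ⟨m, n, rfl⟩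
    exact ⟨n, by simp only [cross, Prod.fst_add, Prod.snd_add, Prod.smul_fst, Prod.smul_snd,
      smul_eq_mul]; ring⟩
  · rintro ⟨n, hn⟩
    obtain ⟨m, hm⟩ := exists_eq_zsmul_of_cross_eq_zero (w := w - n • v) hu <| by
      simp only [cross, Prod.fst_sub, Prod.snd_sub, Prod.smul_fst, Prod.smul_snd,
        smul_eq_mul] at hn ⊢
      linear_combination hn
    exact ⟨m, n, by rw [← hm, sub_add_cancel]⟩

lemma ncard_range_eq_of_apply_eq_iff {α β γ : Type*} {F : α → β} {g : α → γ}
    (hg : Surjective g) (h : ∀ a a', F a = F a' ↔ g a = g a') :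
    (range F).ncard = Nat.card γ := by
  have hrange : range F = range (F ∘ surjInv hg) := by
    refine (range_comp_subset_range _ _).antisymm' ?_
    rintro _ ⟨a, rfl⟩
    exact ⟨g a, (h _ _).2 (surjInv_eq hg _)⟩
  rw [hrange, ← Nat.card_coe_set_eq, Nat.card_range_of_injective]
  intro c c' hcc
  simpa only [surjInv_eq] using (h _ _).1 hcc

@[simp] lemma intVec_add (v w : ℤ × ℤ) : intVec (v + w) = intVec v + intVec w := by
  simp [intVec]

@[simp] lemma intVec_sub (v w : ℤ × ℤ) : intVec (v - w) = intVec v - intVec w := by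
  simp [intVec]

@[simp] lemma intVec_zsmul (m : ℤ) (v : ℤ × ℤ) : intVec (m • v) = (m : ℝ) • intVec v := by
  simp [intVec]

lemma intVec_injective : Injective intVec := fun v w h => by
  simp only [intVec, Prod.mk.injEq, Int.cast_inj] at h
  exact Prod.ext h.1 h.2

lemma AddCircle.coe_eq_coe_iff_exists_int {x y : ℝ} :
    (x : AddCircle (1 : ℝ)) = y ↔ ∃ k : ℤ, x = y + k := by
  rw [← sub_eq_zero, ← AddCircle.coe_sub, AddCircle.coe_eq_zero_iff]
  exact exists_congr fun k => by rw [zsmul_one, eq_comm, sub_eq_iff_eq_add']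

lemma torusProj_eq_iff {x y : ℝ × ℝ} :
    torusProj x = torusProj y ↔ ∃ v : ℤ × ℤ, x = y + intVec v := by
  simp only [torusProj, AddCircle.coe_eq_coe_iff_exists_int, Prod.ext_iff,
    Prod.fst_add, Prod.snd_add, intVec, Prod.exists]
  exact ⟨fun ⟨⟨k, hk⟩, ⟨l, hl⟩⟩ => ⟨k, l, hk, hl⟩, fun ⟨k, l, hk, hl⟩ => ⟨⟨k, hk⟩, ⟨l, hl⟩⟩⟩

lemma torusProj_add_intVec (x : ℝ × ℝ) (v : ℤ × ℤ) : torusProj (x + intVec v) = torusProj x :=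
  torusProj_eq_iff.2 ⟨v, rfl⟩

section Periodic

variable {E : Type*} [NormedAddCommGroup E] [NormedSpace ℝ E] {γ : ℝ → E} {a : E}

lemma periodic_sub_smul (hper : ∀ t, γ (t + 1) = γ t + a) :
    Periodic (fun t => γ t - t • a) 1 := fun t => by
  simp only [hper, add_smul, one_smul]; abel

lemma apply_add_intCast (hper : ∀ t, γ (t + 1) = γ t + a) (t : ℝ) (m : ℤ) :
    γ (t + m) = γ t + (m : ℝ) • a := by
  have := (periodic_sub_smul hper).int_mul m t
  simp only [mul_one, add_smul] at this
  linear_combination (norm := abel) this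

lemma isBounded_range_sub_smul (hc : Continuous γ) (hper : ∀ t, γ (t + 1) = γ t + a) :
    IsBounded (range fun t => γ t - t • a) := by
  rw [← (periodic_sub_smul hper).image_Icc one_pos 0]
  exact (isCompact_Icc.image (by fun_prop)).isBounded

end Periodic

namespace Complex

theorem not_exists_continuousOn_exp_eq_sphere {R : ℝ} (hR : 0 < R) :
    ¬ ∃ f : ℂ → ℂ, ContinuousOn f (Metric.sphere 0 R) ∧
      ∀ w ∈ Metric.sphere (0 : ℂ) R, exp (f w) = w := by
  rintro ⟨f, hf, hexp⟩
  let c : ℝ → ℂ := fun t => R * exp (2 * Real.pi * I * t)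
  have hc : ∀ t, c t ∈ Metric.sphere (0 : ℂ) R := fun t => by
    simp [c, norm_exp, abs_of_pos hR]
  -- `g` would be a continuous lift of the constant loop `R` through `exp`, yet `g 1 = g 0 - 2πi`.
  let g : ℝ → ℂ := fun t => f (c t) - 2 * Real.pi * I * t
  have hg : Continuous g := (hf.comp_continuous (by fun_prop) hc).sub (by fun_prop)
  have hlift : ∀ t, exp (g t) = R := fun t => by
    rw [exp_sub, hexp _ (hc t), mul_div_cancel_right₀ _ (exp_ne_zero _)]
  have h01 := isCoveringMap_exp.const_of_comp hg (fun a a' => Subtype.ext <| by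
    simp only [hlift]) 0 1
  have hc1 : c 1 = c 0 := by simp [c]
  simp only [g, hc1, ofReal_zero, ofReal_one] at h01
  have : (2 * Real.pi * I : ℂ) = 0 := by linear_combination h01
  simp [Real.pi_ne_zero] at this

theorem exists_continuous_exp_eq {A : Type*} [TopologicalSpace A] [SimplyConnectedSpace A]
    [LocallyPathConnectedSpace A] {G : A → ℂ} (hG : Continuous G) (hG0 : ∀ a, G a ≠ 0) :
    ∃ L : A → ℂ, Continuous L ∧ ∀ a, exp (L a) = G a := by
  obtain ⟨a₀⟩ := (inferInstance : Nonempty A)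
  obtain ⟨L, ⟨-, hL⟩, -⟩ := isCoveringMapOn_exp.existsUnique_continuousMap_lifts ⟨G, hG⟩
    (exp_log (hG0 a₀)) hG0
  exact ⟨L, L.continuous, congrFun hL⟩

theorem surjective_add_of_isBounded_range {Q : ℂ → ℂ} (hQ : Continuous Q)
    (hQb : IsBounded (range Q)) : Surjective fun z => z + Q z := by
  intro v
  by_contra! hv
  obtain ⟨L, hL, hexpL⟩ := exists_continuous_exp_eq (G := fun z => z + Q z - v) (by fun_prop)
    fun z => sub_ne_zero.2 (hv z)
  obtain ⟨C, hC⟩ := hQb.exists_norm_le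
  have hC0 : 0 ≤ C := (norm_nonneg _).trans (hC _ (mem_range_self 0))
  set R := C + ‖v‖ + 1
  have hR : 0 < R := by positivity
  have hslit : ∀ w ∈ Metric.sphere (0 : ℂ) R, (w + Q w - v) / w ∈ slitPlane := by
    intro w hw
    have hw0 : w ≠ 0 := ne_zero_of_mem_sphere hR.ne' ⟨w, hw⟩
    rw [mem_sphere_zero_iff_norm] at hw
    have : (w + Q w - v) / w = 1 + (Q w - v) / w := by field_simp; ring
    rw [this]
    apply mem_slitPlane_of_norm_lt_one
    rw [norm_div, hw, div_lt_one hR]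
    linarith [norm_sub_le (Q w) v, hC _ (mem_range_self w)]
  refine not_exists_continuousOn_exp_eq_sphere hR
    ⟨fun w => L w - log ((w + Q w - v) / w), ?_, ?_⟩
  · refine hL.continuousOn.sub (ContinuousOn.clog ?_ hslit)
    exact ContinuousOn.div (by fun_prop) continuousOn_id fun w hw =>
      ne_zero_of_mem_sphere hR.ne' ⟨w, hw⟩
  · intro w hw
    have hw0 : w ≠ 0 := ne_zero_of_mem_sphere hR.ne' ⟨w, hw⟩
    rw [exp_sub, hexpL, exp_log (slitPlane_ne_zero (hslit w hw))]
    field_simp [sub_ne_zero.2 (hv w)]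

end Complex

namespace ContinuousLinearEquiv

theorem surjective_add_of_isBounded_range {E : Type*} [NormedAddCommGroup E] [NormedSpace ℝ E]
    (A : E ≃L[ℝ] ℝ × ℝ) {P : E → ℝ × ℝ} (hP : Continuous P) (hPb : IsBounded (range P)) :
    Surjective fun x => A x + P x := by
  let e := Complex.equivRealProdCLM
  let Q : ℂ → ℂ := fun z => e.symm (P (A.symm (e z)))
  have hQb : IsBounded (range Q) :=
    (e.symm.lipschitz.isBounded_image hPb).subset
      (range_subset_iff.2 fun z => ⟨_, mem_range_self _, rfl⟩)
  intro y
  obtain ⟨z, hz⟩ := Complex.surjective_add_of_isBounded_range (by fun_prop) hQb (e.symm y)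
  refine ⟨A.symm (e z), ?_⟩
  simpa [Q] using congrArg e hz

end ContinuousLinearEquiv

theorem exists_eq_add_of_det_ne_zero {a b : ℝ × ℝ} (hab : a.1 * b.2 - a.2 * b.1 ≠ 0)
    {γ₁ γ₂ : ℝ → ℝ × ℝ} (hc₁ : Continuous γ₁) (hc₂ : Continuous γ₂)
    (hper₁ : ∀ t, γ₁ (t + 1) = γ₁ t + a) (hper₂ : ∀ t, γ₂ (t + 1) = γ₂ t + b) (v : ℝ × ℝ) :
    ∃ s t, γ₁ s = γ₂ t + v := by
  let A : ℝ × ℝ →ₗ[ℝ] ℝ × ℝ :=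
    (LinearMap.fst ℝ ℝ ℝ).smulRight a - (LinearMap.snd ℝ ℝ ℝ).smulRight b
  have hA : Injective A := by
    rw [← LinearMap.ker_eq_bot, LinearMap.ker_eq_bot']
    rintro ⟨s, t⟩ h
    simp only [A, LinearMap.sub_apply, LinearMap.smulRight_apply, LinearMap.fst_apply,
      LinearMap.snd_apply, Prod.ext_iff, Prod.fst_sub, Prod.snd_sub, Prod.smul_fst, Prod.smul_snd,
      smul_eq_mul, Prod.fst_zero, Prod.snd_zero] at h
    have hs : (a.1 * b.2 - a.2 * b.1) * s = 0 := by linear_combination b.2 * h.1 - b.1 * h.2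
    have ht : (a.1 * b.2 - a.2 * b.1) * t = 0 := by linear_combination a.2 * h.1 - a.1 * h.2
    exact Prod.ext ((mul_eq_zero.1 hs).resolve_left hab) ((mul_eq_zero.1 ht).resolve_left hab)
  let P : ℝ × ℝ → ℝ × ℝ := fun x => (γ₁ x.1 - x.1 • a) - (γ₂ x.2 - x.2 • b)
  have hPb : IsBounded (range P) :=
    ((isBounded_range_sub_smul hc₁ hper₁).sub (isBounded_range_sub_smul hc₂ hper₂)).subset
      (range_subset_iff.2 fun x => Set.sub_mem_sub (mem_range_self _) (mem_range_self _))
  obtain ⟨⟨s, t⟩, hst⟩ := (LinearEquiv.ofInjectiveEndo A hA).toContinuousLinearEquiv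
    |>.surjective_add_of_isBounded_range (by fun_prop) hPb v
  refine ⟨s, t, ?_⟩
  simp only [A, P, LinearEquiv.coe_toContinuousLinearEquiv', LinearEquiv.coe_ofInjectiveEndo,
    LinearMap.sub_apply, LinearMap.smulRight_apply, LinearMap.fst_apply, LinearMap.snd_apply] at hst
  rw [← hst]; abel

section Curves

variable {h₁ h₂ : ℤ × ℤ} {γ₁ γ₂ : ℝ → ℝ × ℝ}

lemma exists_sub_eq_zsmul_add_zsmul_of_torusProj_eq
    (hper₁ : ∀ t, γ₁ (t + 1) = γ₁ t + intVec h₁) (hper₂ : ∀ t, γ₂ (t + 1) = γ₂ t + intVec h₂)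
    (hsimple₁ : ∀ s t : ℝ, torusProj (γ₁ s) = torusProj (γ₁ t) → ∃ m : ℤ, t = s + m)
    (hsimple₂ : ∀ s t : ℝ, torusProj (γ₂ s) = torusProj (γ₂ t) → ∃ m : ℤ, t = s + m)
    {s s' t t' : ℝ} {v v' : ℤ × ℤ} (h : γ₁ s = γ₂ t + intVec v)
    (h' : γ₁ s' = γ₂ t' + intVec v') (hproj : torusProj (γ₁ s) = torusProj (γ₁ s')) :
    ∃ m n : ℤ, v' - v = m • h₁ + n • h₂ := by
  obtain ⟨m, rfl⟩ := hsimple₁ s s' hproj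
  rw [apply_add_intCast hper₁, h] at h'
  obtain ⟨n, rfl⟩ := hsimple₂ t t' <| torusProj_eq_iff.2 ⟨v' - v - m • h₁, by
    simp only [intVec_sub, intVec_zsmul]
    linear_combination (norm := module) h'⟩
  rw [apply_add_intCast hper₂] at h'
  refine ⟨m, -n, intVec_injective ?_⟩
  simp only [intVec_sub, intVec_add, intVec_zsmul, Int.cast_neg]
  linear_combination (norm := module) -h'

lemma torusProj_eq_of_sub_eq_zsmul_add_zsmul
    (hper₁ : ∀ t, γ₁ (t + 1) = γ₁ t + intVec h₁) (hper₂ : ∀ t, γ₂ (t + 1) = γ₂ t + intVec h₂)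
    (honce : ∀ v : ℤ × ℤ,
      (Set.range γ₁ ∩ ((fun x => x + intVec v) '' Set.range γ₂)).Subsingleton)
    {s s' t t' : ℝ} {v v' : ℤ × ℤ} (h : γ₁ s = γ₂ t + intVec v)
    (h' : γ₁ s' = γ₂ t' + intVec v') {m n : ℤ} (hvv' : v' - v = m • h₁ + n • h₂) :
    torusProj (γ₁ s) = torusProj (γ₁ s') := by
  have hv : v' = v + m • h₁ + n • h₂ := by rw [add_assoc, ← hvv']; abel
  have hmeet : γ₁ (s' + (-m : ℤ)) = γ₂ (t' + n) + intVec v := by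
    rw [apply_add_intCast hper₁, apply_add_intCast hper₂, h', hv]
    simp only [intVec_add, intVec_zsmul, Int.cast_neg]
    module
  rw [honce v ⟨mem_range_self s, γ₂ t, mem_range_self t, h.symm⟩
    ⟨mem_range_self _, _, mem_range_self _, hmeet.symm⟩, apply_add_intCast hper₁,
    ← intVec_zsmul, torusProj_add_intVec]

lemma image_range_inter_image_range_eq_range
    (honce : ∀ v : ℤ × ℤ,
      (Set.range γ₁ ∩ ((fun x => x + intVec v) '' Set.range γ₂)).Subsingleton)
    {S T : ℤ × ℤ → ℝ} (hST : ∀ v, γ₁ (S v) = γ₂ (T v) + intVec v) :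
    torusProj '' range γ₁ ∩ torusProj '' range γ₂ = range fun v => torusProj (γ₁ (S v)) := by
  ext x
  constructor
  · rintro ⟨⟨_, ⟨s, rfl⟩, rfl⟩, _, ⟨t, rfl⟩, hts⟩
    obtain ⟨v, hv⟩ := torusProj_eq_iff.1 hts.symm
    exact ⟨v, congrArg torusProj <| honce v ⟨mem_range_self _, _, mem_range_self _, (hST v).symm⟩
      ⟨mem_range_self s, _, mem_range_self t, hv.symm⟩⟩
  · rintro ⟨v, rfl⟩
    exact ⟨mem_image_of_mem _ (mem_range_self _), γ₂ (T v), mem_range_self _,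
      by simp only [hST, torusProj_add_intVec]⟩

end Curves

theorem torus_curves_intersection_card_general (h₁ h₂ : ℤ × ℤ)
    (hprim₁ : IsCoprime h₁.1 h₁.2)
    (hint : h₁.1 * h₂.2 - h₁.2 * h₂.1 ≠ 0)
    (γ₁ γ₂ : ℝ → ℝ × ℝ)
    (hc₁ : Continuous γ₁) (hc₂ : Continuous γ₂)
    (hper₁ : ∀ t, γ₁ (t + 1) = γ₁ t + intVec h₁)
    (hper₂ : ∀ t, γ₂ (t + 1) = γ₂ t + intVec h₂)
    (hsimple₁ : ∀ s t : ℝ, torusProj (γ₁ s) = torusProj (γ₁ t) → ∃ m : ℤ, t = s + m)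
    (hsimple₂ : ∀ s t : ℝ, torusProj (γ₂ s) = torusProj (γ₂ t) → ∃ m : ℤ, t = s + m)
    (honce : ∀ v : ℤ × ℤ,
      (Set.range γ₁ ∩ ((fun x => x + intVec v) '' Set.range γ₂)).Subsingleton) :
    ((torusProj '' Set.range γ₁) ∩ (torusProj '' Set.range γ₂)).ncard =
      (h₁.1 * h₂.2 - h₁.2 * h₂.1).natAbs := by
  have hint' : (intVec h₁).1 * (intVec h₂).2 - (intVec h₁).2 * (intVec h₂).1 ≠ 0 := by
    simp only [intVec]; exact_mod_cast hint
  choose S T hST using fun v =>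
    exists_eq_add_of_det_ne_zero hint' hc₁ hc₂ hper₁ hper₂ (intVec v)
  have hfiber : ∀ v v', torusProj (γ₁ (S v)) = torusProj (γ₁ (S v')) ↔
      (cross h₁ v : ZMod (cross h₁ h₂).natAbs) = cross h₁ v' := by
    intro v v'
    rw [ZMod.intCast_eq_intCast_iff_dvd_sub, Int.natAbs_dvd, ← cross_sub,
      ← exists_eq_zsmul_add_zsmul_iff_dvd hprim₁]
    exact ⟨exists_sub_eq_zsmul_add_zsmul_of_torusProj_eq hper₁ hper₂ hsimple₁ hsimple₂
      (hST v) (hST v'), fun ⟨_, _, hmn⟩ =>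
        torusProj_eq_of_sub_eq_zsmul_add_zsmul hper₁ hper₂ honce (hST v) (hST v') hmn⟩
  rw [image_range_inter_image_range_eq_range honce hST, ncard_range_eq_of_apply_eq_iff
    (ZMod.intCast_surjective.comp (cross_surjective hprim₁)) hfiber, Nat.card_zmod]
  rfl

/-- Corollary 8.2: two closed curves on the torus in primitive homology
classes `h₁, h₂` with `h₁ · h₂ ≠ 0`, whose lifts pairwise intersect at most once,
intersect in exactly `|h₁ · h₂|` points. -/
theorem torus_curves_intersection_card (h₁ h₂ : ℤ × ℤ)
    (hprim₁ : IsCoprime h₁.1 h₁.2) (hprim₂ : IsCoprime h₂.1 h₂.2)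
    (hint : h₁.1 * h₂.2 - h₁.2 * h₂.1 ≠ 0)
    (γ₁ γ₂ : ℝ → ℝ × ℝ)
    (hc₁ : Continuous γ₁) (hc₂ : Continuous γ₂)
    (hper₁ : ∀ t, γ₁ (t + 1) = γ₁ t + intVec h₁)
    (hper₂ : ∀ t, γ₂ (t + 1) = γ₂ t + intVec h₂)
    (hsimple₁ : ∀ s t : ℝ, torusProj (γ₁ s) = torusProj (γ₁ t) → ∃ m : ℤ, t = s + m)
    (hsimple₂ : ∀ s t : ℝ, torusProj (γ₂ s) = torusProj (γ₂ t) → ∃ m : ℤ, t = s + m)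
    (honce : ∀ v : ℤ × ℤ,
      (Set.range γ₁ ∩ ((fun x => x + intVec v) '' Set.range γ₂)).Subsingleton) :
    ((torusProj '' Set.range γ₁) ∩ (torusProj '' Set.range γ₂)).ncard =
      (h₁.1 * h₂.2 - h₁.2 * h₂.1).natAbs :=
  torus_curves_intersection_card_general h₁ h₂ hprim₁ hint γ₁ γ₂ hc₁ hc₂ hper₁ hper₂ hsimple₁
    hsimple₂ honce
end

section
/- Let T² = (ℝ/ℤ)² carry the metric ds² = f(y)² dx² + dy² with f smooth and positive, and suppose f has a strict global minimum at y = a. Let c(t) = (x(t), y(t)) be a unit-speed geodesic with y(t₀) = a for some t₀. Then either ẏ(t) ≡ 0 for all t (so the trace of c is the circle y = a), or ẏ(t) never changes sign. -/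
open Filter Topology
open scoped ContDiff

/-- on the torus of revolution `ds² = f(y)² dx² + dy²`, where `f` has a
strict global minimum at `y = a` (modulo 1), any unit-speed geodesic through the circle
`y = a` either stays on that circle (`ẏ ≡ 0`) or `ẏ` never changes sign. -/
theorem clairaut_dichotomy (f : ℝ → ℝ) (hf : ContDiff ℝ (⊤ : ℕ∞) f)
    (hfper : ∀ y, f (y + 1) = f y) (hfpos : ∀ y, 0 < f y)
    (a : ℝ) (hmin : ∀ z, f a ≤ f z)
    (hstrict : ∀ z, f z = f a → ∃ n : ℤ, z = a + n)
    (x y x' y' x'' y'' : ℝ → ℝ)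
    (hx : ∀ t, HasDerivAt x (x' t) t) (hy : ∀ t, HasDerivAt y (y' t) t)
    (hx' : ∀ t, HasDerivAt x' (x'' t) t) (hy' : ∀ t, HasDerivAt y' (y'' t) t)
    (hunit : ∀ t, f (y t) ^ 2 * x' t ^ 2 + y' t ^ 2 = 1)
    (hgeo₁ : ∀ t, x'' t + 2 * (deriv f (y t) / f (y t)) * x' t * y' t = 0)
    (hgeo₂ : ∀ t, y'' t = f (y t) * deriv f (y t) * x' t ^ 2)
    (t₀ : ℝ) (ht₀ : y t₀ = a) :
    (∀ t, y' t = 0) ∨ (∀ t, 0 ≤ y' t) ∨ (∀ t, y' t ≤ 0) := by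
  have hfa : 0 < f a := hfpos a
  have hfd : Differentiable ℝ f := hf.differentiable (by simp)
  have hf2 : ContDiff ℝ ∞ f := hf.of_le (by simp)
  have hfc' : ContDiff ℝ ∞ (deriv f) := (contDiff_infty_iff_deriv.mp hf2).2
  have hfne : ∀ z, f z ≠ 0 := fun z => (hfpos z).ne'
  -- Clairaut constant
  set C : ℝ := f a ^ 2 * x' t₀ with hCdef
  have hfy : ∀ t, HasDerivAt (fun t => f (y t)) (deriv f (y t) * y' t) t := fun t =>
    (hfd (y t)).hasDerivAt.comp t (hy t)
  have hC : ∀ t, f (y t) ^ 2 * x' t = C := by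
    have hd : ∀ t, HasDerivAt (fun t => f (y t) ^ 2 * x' t) 0 t := by
      intro t
      have h1 := ((hfy t).pow 2).mul (hx' t)
      have key : ∀ d : ℝ, HasDerivAt (fun t => f (y t) ^ 2 * x' t) d t → d = 0 →
          HasDerivAt (fun t => f (y t) ^ 2 * x' t) 0 t := fun d hd h => h ▸ hd
      apply key _ h1
      have h3 := hgeo₁ t
      have h4 := hfne (y t)
      field_simp at h3
      simp only [Pi.pow_apply]
      push_cast
      ring_nf
      ring_nf at h3
      linear_combination f (y t) * h3
    have hdiff : Differentiable ℝ (fun t => f (y t) ^ 2 * x' t) := fun t => (hd t).differentiableAt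
    have hz : ∀ t, deriv (fun t => f (y t) ^ 2 * x' t) t = 0 := fun t => (hd t).deriv
    have := is_const_of_deriv_eq_zero hdiff hz
    intro t
    have h5 := this t t₀
    simpa [ht₀, hCdef] using h5
  -- squared speed identity
  have hsq : ∀ t, y' t ^ 2 = 1 - C ^ 2 / f (y t) ^ 2 := by
    intro t
    have h1 := hunit t
    have h2 := hC t
    have h4 := hfne (y t)
    have h3 : C ^ 2 / f (y t) ^ 2 = f (y t) ^ 2 * x' t ^ 2 := by
      rw [← h2]; field_simp
    rw [h3]; linarith
  have hmono : ∀ t, y' t₀ ^ 2 ≤ y' t ^ 2 := by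
    intro t
    rw [hsq t, hsq t₀, ht₀]
    have hle : f a ^ 2 ≤ f (y t) ^ 2 := by nlinarith [hmin (y t), hfa]
    have : C ^ 2 / f (y t) ^ 2 ≤ C ^ 2 / f a ^ 2 :=
      div_le_div_of_nonneg_left (sq_nonneg C) (by positivity) hle
    linarith
  have hcy' : Continuous y' := by
    rw [continuous_iff_continuousAt]; exact fun t => (hy' t).continuousAt
  by_cases h0 : y' t₀ = 0
  · -- ODE uniqueness: y' ≡ 0
    left
    have hC2 : C ^ 2 = f a ^ 2 := by
      have h1 := hunit t₀
      rw [ht₀, h0] at h1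
      rw [hCdef]
      linear_combination f a ^ 2 * h1
    set g : ℝ → ℝ := fun z => f a ^ 2 * deriv f z / f z ^ 3 with hgdef
    have hode : ∀ t, y'' t = g (y t) := by
      intro t
      have h1 := hgeo₂ t
      have h2 : f (y t) ^ 4 * x' t ^ 2 = C ^ 2 := by
        have h5 := hC t
        linear_combination (f (y t) ^ 2 * x' t + C) * h5
      have h4 := hfne (y t)
      rw [h1, hgdef]
      field_simp
      linear_combination deriv f (y t) * h2 + deriv f (y t) * hC2
    have hgc : ContDiff ℝ ∞ g :=
      (contDiff_const.mul hfc').div (hf2.pow 3) (fun z => pow_ne_zero 3 (hfne z))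
    -- deriv f is periodic, hence g and deriv g are
    have hper : ∀ (h : ℝ → ℝ), Function.Periodic h 1 → Function.Periodic (deriv h) 1 := by
      intro h hp z
      have h1 : (fun w => h (w + 1)) = h := funext hp
      calc deriv h (z + 1) = deriv (fun w => h (w + 1)) z := by
            rw [deriv_comp_add_const]
        _ = deriv h z := by rw [h1]
    have hfP : Function.Periodic f 1 := fun z => hfper z
    have hgP : Function.Periodic g 1 := by
      intro z
      simp only [hgdef]
      rw [hper f hfP z, hfP z]
    have hg'P : Function.Periodic (deriv g) 1 := hper g hgP
    have hg'c : Continuous (deriv g) := ((contDiff_infty_iff_deriv.mp hgc).2).continuous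
    -- bound deriv g
    obtain ⟨M, hM⟩ : ∃ M, ∀ z ∈ Set.Icc (0:ℝ) 1, |deriv g z| ≤ M := by
      obtain ⟨z₀, _, hz₀⟩ := isCompact_Icc.exists_isMaxOn (Set.nonempty_Icc.mpr zero_le_one)
        (continuous_abs.comp hg'c).continuousOn
      exact ⟨|deriv g z₀|, fun z hz => hz₀ hz⟩
    have hMb : ∀ z, |deriv g z| ≤ M := by
      intro z
      obtain ⟨w, hw, hzw⟩ := hg'P.exists_mem_Ico₀ one_pos z
      rw [hzw]
      exact hM w (Set.Ico_subset_Icc_self hw)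
    have glip : LipschitzWith (Real.toNNReal M) g := by
      apply lipschitzWith_of_nnnorm_deriv_le (hgc.differentiable (by simp))
      intro z
      rw [← NNReal.coe_le_coe, coe_nnnorm, Real.norm_eq_abs, Real.coe_toNNReal']
      exact le_max_of_le_left (hMb z)
    -- vector field
    set V : ℝ × ℝ → ℝ × ℝ := fun p => (p.2, g p.1) with hVdef
    have hVg : LipschitzWith (Real.toNNReal M) (fun p : ℝ × ℝ => g p.1) := by
      simpa [Function.comp_def] using glip.comp (LipschitzWith.prod_fst (α := ℝ) (β := ℝ))
    have hVs : LipschitzWith 1 (fun p : ℝ × ℝ => p.2) := LipschitzWith.prod_snd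
    have hV : LipschitzWith (max 1 (Real.toNNReal M)) V := hVs.prodMk hVg
    have hga : g a = 0 := by
      have hloc : IsLocalMin f a := Filter.Eventually.of_forall hmin
      have : deriv f a = 0 := hloc.deriv_eq_zero
      simp [hgdef, this]
    set F : ℝ → ℝ × ℝ := fun t => (y t, y' t) with hFdef
    have hF : ∀ t, HasDerivAt F (V (F t)) t := by
      intro t
      have := (hy t).prodMk (hy' t)
      rwa [hode t] at this
    set G : ℝ → ℝ × ℝ := fun _ => ((a : ℝ), (0 : ℝ)) with hGdef
    have hG : ∀ t : ℝ, HasDerivAt G (V (G t)) t := by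
      intro t
      have : V (a, 0) = (0, 0) := by simp [hVdef, hga]
      rw [hGdef]
      simpa [this, Prod.mk_zero_zero] using hasDerivAt_const t ((a : ℝ), (0 : ℝ))
    have hF0 : F t₀ = (a, 0) := by simp [hFdef, ht₀, h0]
    -- forward
    have hfwd : ∀ t, t₀ ≤ t → y' t = 0 := by
      intro t₁ ht₁
      have key := ODE_solution_unique (v := fun _ => V) (fun _ => hV)
        (f := F) (g := G) (a := t₀) (b := t₁)
        (fun s _ => (hF s).continuousAt.continuousWithinAt)
        (fun s _ => (hF s).hasDerivWithinAt)
        (fun s _ => (hG s).continuousAt.continuousWithinAt)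
        (fun s _ => (hG s).hasDerivWithinAt)
        (by rw [hF0])
      have := key (Set.right_mem_Icc.mpr ht₁)
      exact congrArg Prod.snd this
    -- backward, via time reversal
    have hbwd : ∀ t, t ≤ t₀ → y' t = 0 := by
      intro t₁ ht₁
      set F₂ : ℝ → ℝ × ℝ := fun s => (y (2 * t₀ - s), -y' (2 * t₀ - s)) with hF₂def
      have hA : ∀ s : ℝ, HasDerivAt (fun s : ℝ => 2 * t₀ - s) (-1) s := by
        intro s
        simpa using (hasDerivAt_id s).const_sub (2 * t₀)
      have hF₂ : ∀ s, HasDerivAt F₂ (V (F₂ s)) s := by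
        intro s
        have h1 : HasDerivAt (fun s => y (2 * t₀ - s)) (-y' (2 * t₀ - s)) s := by
          simpa [Function.comp_def] using (hy (2 * t₀ - s)).comp s (hA s)
        have h2 : HasDerivAt (fun s => -y' (2 * t₀ - s)) (y'' (2 * t₀ - s)) s := by
          have := ((hy' (2 * t₀ - s)).comp s (hA s)).neg
          simpa [Function.comp_def, Pi.neg_def] using this
        have h3 := h1.prodMk h2
        have h4 : V (F₂ s) = (-y' (2 * t₀ - s), y'' (2 * t₀ - s)) := by
          simp [hVdef, hF₂def, hode]
        rwa [h4]
      have hF₂0 : F₂ t₀ = (a, 0) := by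
        have h27 : 2 * t₀ - t₀ = t₀ := by ring
        simp [hF₂def, h27, ht₀, h0]
      have key := ODE_solution_unique (v := fun _ => V) (fun _ => hV)
        (f := F₂) (g := G) (a := t₀) (b := 2 * t₀ - t₁)
        (fun s _ => (hF₂ s).continuousAt.continuousWithinAt)
        (fun s _ => (hF₂ s).hasDerivWithinAt)
        (fun s _ => (hG s).continuousAt.continuousWithinAt)
        (fun s _ => (hG s).hasDerivWithinAt)
        (by rw [hF₂0])
      have h5 := key (Set.right_mem_Icc.mpr (by linarith))
      have h6 : -y' (2 * t₀ - (2 * t₀ - t₁)) = 0 := congrArg Prod.snd h5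
      have h7 : 2 * t₀ - (2 * t₀ - t₁) = t₁ := by ring
      rw [h7] at h6
      linarith
    intro t
    rcases le_total t₀ t with h | h
    · exact hfwd t h
    · exact hbwd t h
  · -- y' never vanishes, hence never changes sign
    have hne : ∀ t, y' t ≠ 0 := by
      intro t ht
      have h1 := hmono t
      rw [ht] at h1
      have : y' t₀ ^ 2 ≤ 0 := by linarith [h1]
      have := pow_eq_zero_iff (n := 2) (by norm_num) |>.mp (le_antisymm this (sq_nonneg _))
      exact h0 this
    right
    by_cases hpos : ∀ t, 0 ≤ y' t
    · exact Or.inl hpos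
    · right
      push_neg at hpos
      obtain ⟨t₁, ht₁⟩ := hpos
      intro t
      by_contra hcon
      push_neg at hcon
      have h2 : (0 : ℝ) ∈ Set.uIcc (y' t₁) (y' t) :=
        Set.mem_uIcc.mpr (Or.inl ⟨le_of_lt ht₁, le_of_lt hcon⟩)
      have h3 := intermediate_value_uIcc (hcy'.continuousOn (s := Set.uIcc t₁ t))
      obtain ⟨s, _, hs⟩ := h3 h2
      exact hne s hs
end
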